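/- Let φ(x,y) be defined as the explicit tridiagonal matrix with entries T₁₁ = (4−x²)/r₁², T₁₂ = T₂₁ = 2x r₂/r₁², T₂₂ = −4(4−x²−4x²y⁴+x⁴y⁴)/(r₁²r₂²), T₂₃ = T₃₂ = 2y r₁/r₂², T₃₃ = y²(x²−4)/r₂², T₁₃ = T₃₁ = 0, where r₁ = √(4+x²+4x²y²), r₂ = √(4+4y²+x²y²). Then for all (x,y) ∈ ℝ², the trace of φ(x,y) equals 0 and the determinant of φ(x,y) equals 0. -/

import Mathlib

open Matrix

noncomputable def r1 (x y : ℝ) : ℝ := Real.sqrt (4 + x^2 + 4*x^2*y^2)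
noncomputable def r2 (x y : ℝ) : ℝ := Real.sqrt (4 + 4*y^2 + x^2*y^2)

noncomputable def phi (x y : ℝ) : Matrix (Fin 3) (Fin 3) ℝ :=
  ((r1 x y)^2 * (r2 x y)^2)⁻¹ •
    !![(4 - x^2) * (r2 x y)^2,  2*x*(r2 x y)^3,  0;
       2*x*(r2 x y)^3,  -4*(4 - x^2 - 4*x^2*y^4 + x^4*y^4),  2*y*(r1 x y)^3;
       0,  2*y*(r1 x y)^3,  y^2*(x^2 - 4)*(r1 x y)^2]

noncomputable def TX : Matrix (Fin 3) (Fin 3) ℝ := !![0,1,0;1,0,0;0,0,0]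

/-
With s = r₁ and t = r₂, the diagonal entry 4 - x² - 4x²y⁴ + x⁴y⁴ of φ factors as (4 - x²)(1 - x²y⁴),
and both invariants reduce to two polynomial identities between s² and t²:
t² - y²s² = 4(1 - x²y⁴) makes the trace vanish, and
s⁴ - x²t⁴ = (s² - xt²)(s² + xt²) = (2 - x)²(1 - xy²) · (2 + x)²(1 + xy²) = (4 - x²)²(1 - x²y⁴)
makes the determinant, a·d·e - a·c² - b²·e for the tridiagonal matrix, vanish.
-/

theorem Matrix.det_symm_tridiagonal_fin_three {R : Type*} [CommRing R] (a b c d e : R) :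
    !![a, b, 0; b, d, c; 0, c, e].det = a * d * e - a * c ^ 2 - b ^ 2 * e := by
  simp only [det_fin_three, of_apply, cons_val', cons_val_zero, cons_val_fin_one, cons_val_one,
    cons_val]
  ring

lemma r1_sq (x y : ℝ) : r1 x y ^ 2 = 4 + x ^ 2 + 4 * x ^ 2 * y ^ 2 :=
  Real.sq_sqrt (by positivity)

lemma r2_sq (x y : ℝ) : r2 x y ^ 2 = 4 + 4 * y ^ 2 + x ^ 2 * y ^ 2 :=
  Real.sq_sqrt (by positivity)

lemma r2_sq_sub_mul_r1_sq (x y : ℝ) :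
    r2 x y ^ 2 - y ^ 2 * r1 x y ^ 2 = 4 * (1 - x ^ 2 * y ^ 4) := by
  rw [r1_sq, r2_sq]
  ring

lemma r1_pow_four_sub_mul_r2_pow_four (x y : ℝ) :
    r1 x y ^ 4 - x ^ 2 * r2 x y ^ 4 = (4 - x ^ 2) ^ 2 * (1 - x ^ 2 * y ^ 4) := by
  rw [show r1 x y ^ 4 = (r1 x y ^ 2) ^ 2 by ring, show r2 x y ^ 4 = (r2 x y ^ 2) ^ 2 by ring,
    r1_sq, r2_sq]
  ring

theorem stmt_3 (x y : ℝ) : (phi x y).trace = 0 ∧ (phi x y).det = 0 := by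
  constructor
  · rw [phi, trace_smul, trace_fin_three, smul_eq_mul, mul_eq_zero]
    right
    simp only [of_apply, cons_val', cons_val_zero, cons_val_fin_one, cons_val_one, cons_val]
    linear_combination (4 - x ^ 2) * r2_sq_sub_mul_r1_sq x y
  · rw [phi, det_smul, det_symm_tridiagonal_fin_three, mul_eq_zero]
    right
    linear_combination (-4 * (4 - x ^ 2) * y ^ 2 * r1 x y ^ 2 * r2 x y ^ 2) *
      r1_pow_four_sub_mul_r2_pow_four x y
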